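/- arXiv:1910.07453 — 2 statements merged into one kernel-verified Lean document; each statement's English description precedes it below -/
import Mathlib

section
/- Under the stated context, α and β are algebraic integers (i.e., integral over ℤ); moreover α·β = y, √C₁·x + i√C₂ = αᵖ, and √C₁·x − i√C₂ = βᵖ. -/
open Polynomial IntermediateField

noncomputable def sqrtneg (c : ℕ) : ℂ := Complex.I * Real.sqrt c

lemma sqrtneg_sq (c : ℕ) : sqrtneg c ^ 2 = -(c : ℂ) := by
  have h : ((Real.sqrt c : ℝ) : ℂ) ^ 2 = (c : ℂ) := by
    rw [← Complex.ofReal_pow, Real.sq_sqrt (by positivity)]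
    norm_num
  simp [sqrtneg, mul_pow, Complex.I_sq, h]

lemma sqrtneg_isIntegral (c : ℕ) : IsIntegral ℚ (sqrtneg c) := by
  refine ⟨X ^ 2 + C (c : ℚ), monic_X_pow_add_C _ two_ne_zero, ?_⟩
  simp [eval₂_add, eval₂_pow, sqrtneg_sq c]

/-- The field `K = ℚ(√-c)`, realised as the subfield of `ℂ` generated by `i·√c`. -/
noncomputable def Kf (c : ℕ) : IntermediateField ℚ ℂ := ℚ⟮sqrtneg c⟯

/-- The class number of `ℚ(√-c)`. -/
noncomputable def classNumberK (c : ℕ) : ℕ :=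
  haveI : FiniteDimensional ℚ (Kf c) :=
    IntermediateField.adjoin.finiteDimensional (sqrtneg_isIntegral c)
  haveI : NumberField (Kf c) := ⟨⟩
  NumberField.classNumber (Kf c)

/-!
Since `C₁ = (√C₁)²` and `d·√-c = i·√C₁·√C₂`, dividing `δᵖ = C₁^((p-1)/2)·(C₁x + d√-c)` by
`(√C₁)ᵖ = C₁^((p-1)/2)·√C₁` gives `αᵖ = √C₁·x + i√C₂`. As `√C₁` is real, `β = conj α`, so `βᵖ` is the
conjugate of `αᵖ`, and `αβ = |α|²` is a real number whose odd `p`-th power is `|αᵖ|² = C₁x² + C₂ = yᵖ`.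
Integrality follows because `αᵖ` is a sum of products of the algebraic integers `√C₁`, `x`, `i`, `√C₂`.
-/

open Complex ComplexConjugate

lemma ofReal_sqrt_natCast_sq (n : ℕ) : ((√(n : ℝ) : ℝ) : ℂ) ^ 2 = n := by
  rw [← ofReal_pow, Real.sq_sqrt n.cast_nonneg, ofReal_natCast]

lemma isIntegral_ofReal_sqrt_natCast (n : ℕ) : IsIntegral ℤ ((√(n : ℝ) : ℝ) : ℂ) :=
  IsIntegral.of_pow two_pos <| by
    rw [ofReal_sqrt_natCast_sq]
    exact isIntegral_natCast n

lemma natCast_mul_sqrtneg {a b c d : ℕ} (h : a * b = c * d ^ 2) :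
    (d : ℂ) * sqrtneg c = I * ((√(a : ℝ) : ℝ) * (√(b : ℝ) : ℝ)) := by
  have hR : √(a : ℝ) * √(b : ℝ) = d * √(c : ℝ) := by
    rw [← Real.sqrt_mul a.cast_nonneg, ← Nat.cast_mul, h, Nat.cast_mul, Nat.cast_pow,
      Real.sqrt_mul c.cast_nonneg, Real.sqrt_sq d.cast_nonneg, mul_comm]
  rw [← ofReal_mul, hR, sqrtneg]
  push_cast
  ring

lemma div_pow_of_sq_pow_mul_eq {K : Type*} [Field K] {s w δ : K} {k : ℕ} (hs : s ≠ 0)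
    (h : (s ^ 2) ^ k * w = δ ^ (2 * k + 1)) : (δ / s) ^ (2 * k + 1) = w / s := by
  rw [div_pow, ← h, pow_succ s (2 * k), pow_mul s 2 k]
  field_simp

theorem stmt5_general (C₁ C₂ c d : ℕ) (hC₁pos : 0 < C₁)
    (hfact : C₁ * C₂ = c * d ^ 2)
    (p : ℕ) (hpodd : Odd p)
    (x y : ℕ)
    (heq : C₁ * x ^ 2 + C₂ = y ^ p)
    (δ : ℂ)
    (hδeq : (C₁ : ℂ) ^ ((p - 1) / 2) * ((C₁ : ℂ) * (x : ℂ) + (d : ℂ) * sqrtneg c) = δ ^ p)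
    (α β : ℂ) (hα : α = δ / (Real.sqrt C₁ : ℂ))
    (hβ : β = (starRingEnd ℂ) δ / (Real.sqrt C₁ : ℂ))
    :
    IsIntegral ℤ α ∧ IsIntegral ℤ β ∧
    α * β = (y : ℂ) ∧
    (Real.sqrt C₁ : ℂ) * (x : ℂ) + Complex.I * (Real.sqrt C₂ : ℂ) = α ^ p ∧
    (Real.sqrt C₁ : ℂ) * (x : ℂ) - Complex.I * (Real.sqrt C₂ : ℂ) = β ^ p := by
  obtain ⟨k, rfl⟩ := hpodd
  have hs₁ : ((√(C₁ : ℝ) : ℝ) : ℂ) ≠ 0 :=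
    ofReal_ne_zero.mpr (Real.sqrt_pos.mpr (by positivity)).ne'
  rw [show (2 * k + 1 - 1) / 2 = k by omega, natCast_mul_sqrtneg hfact,
    ← ofReal_sqrt_natCast_sq C₁] at hδeq
  have hαp : α ^ (2 * k + 1) = √(C₁ : ℝ) * x + I * √(C₂ : ℝ) := by
    rw [hα, div_pow_of_sq_pow_mul_eq hs₁ hδeq]
    field_simp
  have hβα : β = conj α := by rw [hα, hβ, map_div₀, conj_ofReal]
  have hβp : β ^ (2 * k + 1) = √(C₁ : ℝ) * x - I * √(C₂ : ℝ) := by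
    rw [hβα, ← map_pow, hαp]
    simp only [map_add, map_mul, conj_ofReal, conj_natCast, conj_I]
    ring
  have hαβ : α * β = y := by
    have hnorm : normSq α ^ (2 * k + 1) = (y : ℝ) ^ (2 * k + 1) := by
      rw [← map_pow, hαp, mul_comm I, ← ofReal_natCast, ← ofReal_mul, normSq_add_mul_I, mul_pow,
        Real.sq_sqrt C₁.cast_nonneg, Real.sq_sqrt C₂.cast_nonneg]
      exact_mod_cast heq
    rw [hβα, mul_conj, (Odd.pow_inj ⟨k, rfl⟩).mp hnorm, ofReal_natCast]
  have hαint : IsIntegral ℤ α := IsIntegral.of_pow (by omega) <| hαp ▸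
    ((isIntegral_ofReal_sqrt_natCast C₁).mul (isIntegral_natCast x)).add
      (isIntegral_int_I.mul (isIntegral_ofReal_sqrt_natCast C₂))
  exact ⟨hαint, hβα ▸ hαint.map (starRingEnd ℂ).toIntAlgHom, hαβ, hαp.symm, hβp.symm⟩

theorem stmt5 (C₁ C₂ c d : ℕ) (hC₁pos : 0 < C₁) (hC₁sqf : Squarefree C₁)
    (hC₂pos : 0 < C₂) (hcop : Nat.gcd C₁ C₂ = 1) (hmod8 : C₁ * C₂ % 8 ≠ 7)
    (hcpos : 0 < c) (hdpos : 0 < d) (hcsqf : Squarefree c)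
    (hfact : C₁ * C₂ = c * d ^ 2)
    (p : ℕ) (hp : p.Prime) (hpodd : Odd p)
    (hpcl : ¬ p ∣ classNumberK c)
    (hp3 : p = 3 → ¬ ∃ m : ℤ, (C₁ : ℤ) * (C₂ : ℤ) = 3 * m ^ 2)
    (x y : ℕ) (hxpos : 0 < x) (hypos : 0 < y)
    (heq : C₁ * x ^ 2 + C₂ = y ^ p)
    (hgcd : Nat.gcd (Nat.gcd (C₁ * x ^ 2) C₂) (y ^ p) = 1)
    (δ : ℂ) (hδK : δ ∈ Kf c) (hδint : IsIntegral ℤ δ)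
    (hδeq : (C₁ : ℂ) ^ ((p - 1) / 2) * ((C₁ : ℂ) * (x : ℂ) + (d : ℂ) * sqrtneg c) = δ ^ p)
    (α β : ℂ) (hα : α = δ / (Real.sqrt C₁ : ℂ))
    (hβ : β = (starRingEnd ℂ) δ / (Real.sqrt C₁ : ℂ))
    :
    IsIntegral ℤ α ∧ IsIntegral ℤ β ∧
    α * β = (y : ℂ) ∧
    (Real.sqrt C₁ : ℂ) * (x : ℂ) + Complex.I * (Real.sqrt C₂ : ℂ) = α ^ p ∧
    (Real.sqrt C₁ : ℂ) * (x : ℂ) - Complex.I * (Real.sqrt C₂ : ℂ) = β ^ p :=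
  stmt5_general C₁ C₂ c d hC₁pos hfact p hpodd x y heq δ hδeq α β hα hβ
end

section
/- Under the stated context, the rational integers (α + β)² and α·β are coprime; moreover α/β is not a unit, i.e., there is no u ∈ ℂ with both u and u⁻¹ algebraic integers such that α = u·β. -/
open Polynomial IntermediateField

/-!
Write `p = 2k + 1` and `z = C₁x + d√-c`, so that `δᵖ = C₁ᵏz` and `δ̄ᵖ = C₁ᵏz̄`. Comparing `p`-th
powers gives `δδ̄ = C₁y`, hence `αβ = y`, and `s = δ + δ̄` is a rational integer. The Dickson
polynomial value `D_p(s, C₁y) = δᵖ + δ̄ᵖ = 2C₁ᵏ⁺¹x` is congruent to `sᵖ` modulo `C₁y`. As `C₁` is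
squarefree this gives `C₁ ∣ s`, so `(α + β)² = s²/C₁ = C₁e²`; and a common prime factor of `s` and
`y` would divide `2C₁x`, which the coprimality and mod 8 hypotheses exclude.

If `α = uβ` with `u` integral, then `u = δ/δ̄ ∈ K` and `z = uᵖz̄`, so `τ = uᵖ + ūᵖ ∈ ℤ` satisfies
`(2 - τ)C₁x² = (2 + τ)C₂`. As `C₁x²` and `C₂` are coprime, `C₁x² + C₂ = yᵖ` then divides `4`,
which is impossible for `p ≥ 3`.
-/

open ComplexConjugate

lemma sqrtneg_mem_Kf (c : ℕ) : sqrtneg c ∈ Kf c := mem_adjoin_simple_self ℚ _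

lemma conj_sqrtneg (c : ℕ) : conj (sqrtneg c) = -sqrtneg c := by
  simp [sqrtneg]

lemma exists_eq_ratCast_add_mul_sqrtneg {c : ℕ} {z : ℂ} (hz : z ∈ Kf c) :
    ∃ a b : ℚ, z = a + b * sqrtneg c := by
  have hadj : (Kf c).toSubalgebra = Algebra.adjoin ℚ {sqrtneg c} :=
    adjoin_simple_toSubalgebra_of_isAlgebraic (sqrtneg_isIntegral c).isAlgebraic
  replace hz : z ∈ Algebra.adjoin ℚ {sqrtneg c} := hadj ▸ hz
  induction hz using Algebra.adjoin_induction with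
  | mem w hw => exact ⟨0, 1, by simp [Set.mem_singleton_iff.mp hw]⟩
  | algebraMap r => exact ⟨r, 0, by simp⟩
  | add w₁ w₂ _ _ h₁ h₂ =>
    obtain ⟨a₁, b₁, rfl⟩ := h₁
    obtain ⟨a₂, b₂, rfl⟩ := h₂
    exact ⟨a₁ + a₂, b₁ + b₂, by push_cast; ring⟩
  | mul w₁ w₂ _ _ h₁ h₂ =>
    obtain ⟨a₁, b₁, rfl⟩ := h₁
    obtain ⟨a₂, b₂, rfl⟩ := h₂
    exact ⟨a₁ * a₂ - b₁ * b₂ * c, a₁ * b₂ + a₂ * b₁, by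
      push_cast
      linear_combination ((b₁ : ℂ) * b₂) * sqrtneg_sq c⟩

lemma conj_mem_Kf {c : ℕ} {z : ℂ} (hz : z ∈ Kf c) : conj z ∈ Kf c := by
  obtain ⟨a, b, rfl⟩ := exists_eq_ratCast_add_mul_sqrtneg hz
  have h : conj ((a : ℂ) + b * sqrtneg c) = a + (-b : ℚ) * sqrtneg c := by
    simp [conj_sqrtneg]
  rw [h]
  exact add_mem (SubfieldClass.ratCast_mem _ a)
    (mul_mem (SubfieldClass.ratCast_mem _ _) (sqrtneg_mem_Kf c))

lemma exists_add_conj_eq_ratCast {c : ℕ} {z : ℂ} (hz : z ∈ Kf c) :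
    ∃ q : ℚ, z + conj z = q := by
  obtain ⟨a, b, rfl⟩ := exists_eq_ratCast_add_mul_sqrtneg hz
  exact ⟨2 * a, by simp [conj_sqrtneg]; ring⟩

lemma exists_ratCast_eq_intCast_of_isIntegral {q : ℚ} (h : IsIntegral ℤ (q : ℂ)) :
    ∃ m : ℤ, (q : ℂ) = m := by
  have hq : IsIntegral ℤ q :=
    (isIntegral_algebraMap_iff (algebraMap ℚ ℂ).injective).mp (by simpa using h)
  obtain ⟨m, rfl⟩ := IsIntegrallyClosed.isIntegral_iff.mp hq
  exact ⟨m, by simp⟩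

lemma exists_add_conj_eq_intCast {c : ℕ} {z : ℂ} (hz : z ∈ Kf c) (hint : IsIntegral ℤ z) :
    ∃ s : ℤ, z + conj z = s := by
  obtain ⟨q, hq⟩ := exists_add_conj_eq_ratCast hz
  rw [hq]
  exact exists_ratCast_eq_intCast_of_isIntegral
    (hq ▸ hint.add (map_isIntegral_int (starRingEnd ℂ) hint))

namespace Polynomial

variable {R : Type*} [CommRing R]

lemma dickson_one_eval_add (x y : R) : ∀ n, (dickson 1 (x * y) n).eval (x + y) = x ^ n + y ^ n
  | 0 => by simp [dickson_zero]; norm_num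
  | 1 => by simp
  | n + 2 => by
    simp only [dickson_add_two, eval_sub, eval_mul, eval_X, eval_C, dickson_one_eval_add x y n,
      dickson_one_eval_add x y (n + 1)]
    ring

lemma dickson_one_zero : ∀ {n : ℕ}, n ≠ 0 → dickson 1 (0 : R) n = X ^ n
  | 1, _ => by simp
  | n + 2, _ => by
    rw [dickson_add_two, dickson_one_zero n.succ_ne_zero]
    simp [pow_succ']

lemma dvd_dickson_one_eval_sub_pow (a s : R) {n : ℕ} (hn : n ≠ 0) :
    a ∣ (dickson 1 a n).eval s - s ^ n := by
  let f := Ideal.Quotient.mk (Ideal.span {a})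
  have hfa : f a = 0 := Ideal.Quotient.eq_zero_iff_mem.mpr (Ideal.mem_span_singleton_self a)
  rw [← Ideal.mem_span_singleton, ← Ideal.Quotient.eq_zero_iff_mem, map_sub, map_pow,
    ← eval_map_apply, map_dickson, hfa, dickson_one_zero hn, eval_pow, eval_X, sub_self]

end Polynomial

lemma coprime_of_gcd_gcd_add_eq_one {A B : ℕ} (h : Nat.gcd (Nat.gcd A B) (A + B) = 1) :
    Nat.Coprime A B := by
  rwa [Nat.gcd_eq_left (Nat.dvd_add (Nat.gcd_dvd_left A B) (Nat.gcd_dvd_right A B))] at h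

lemma Int.eight_dvd_mul_add_one_of_odd {a b x : ℤ} (ha : Odd a) (hx : Odd x)
    (h : 8 ∣ a * x ^ 2 + b) : 8 ∣ a * b + 1 := by
  rw [show a * b + 1 = a * (a * x ^ 2 + b) - ((a * x) ^ 2 - 1) by ring]
  exact dvd_sub (h.mul_left a) (Int.eight_dvd_sq_sub_one_of_odd (ha.mul hx))

lemma coprime_two_mul_mul_of_add_eq_pow {C₁ C₂ x y p : ℕ} (hp : 3 ≤ p) (hmod8 : C₁ * C₂ % 8 ≠ 7)
    (heq : C₁ * x ^ 2 + C₂ = y ^ p) (hcop : Nat.Coprime (C₁ * x ^ 2) C₂) :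
    Nat.Coprime y (2 * C₁ * x) := by
  have hA : Nat.Coprime (C₁ * x ^ 2) (y ^ p) := by
    rwa [← heq, add_comm, Nat.coprime_add_self_right]
  have hC₁x : Nat.Coprime (C₁ * x) y :=
    ((Nat.coprime_pow_right_iff (by omega) _ _).mp hA).coprime_dvd_left ⟨x, by ring⟩
  rw [mul_assoc]
  refine Nat.Coprime.mul_right (Nat.coprime_two_right.mpr ?_) hC₁x.symm
  by_contra hy
  have h8 : 8 ∣ y ^ p := (pow_dvd_pow 2 hp).trans
    (pow_dvd_pow_of_dvd (even_iff_two_dvd.mp (Nat.not_odd_iff_even.mp hy)) p)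
  have hAodd : Odd (C₁ * x ^ 2) :=
    Nat.coprime_two_right.mp (hA.coprime_dvd_right ((by norm_num : 2 ∣ 8).trans h8))
  have hodd := Nat.odd_mul.mp hAodd
  have h := Int.eight_dvd_mul_add_one_of_odd (a := C₁) (b := C₂) (x := x)
    (by exact_mod_cast hodd.1) (by exact_mod_cast (Nat.odd_mul.mp (sq x ▸ hodd.2)).1)
    (by exact_mod_cast heq ▸ h8)
  omega

lemma false_of_two_sub_mul_eq_two_add_mul {A B y p : ℕ} {τ : ℤ} (hA : 0 < A) (hB : 0 < B)
    (hAB : Nat.Coprime A B) (hp : 3 ≤ p) (hy : A + B = y ^ p) (h : (2 - τ) * A = (2 + τ) * B) :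
    False := by
  obtain ⟨t, ht⟩ : (A : ℤ) ∣ 2 + τ :=
    (Nat.isCoprime_iff_coprime.mpr hAB).dvd_of_dvd_mul_right ⟨2 - τ, by linarith⟩
  have hBt : 2 - τ = B * t := by
    refine mul_right_cancel₀ (by positivity : (A : ℤ) ≠ 0) ?_
    rw [h, ht]
    ring
  have h4 : y ^ p ∣ 4 := by
    rw [← hy]
    exact Int.natCast_dvd_natCast.mp ⟨t, by push_cast; linarith⟩
  have hy2 : 2 ≤ y := by
    by_contra! hy1
    interval_cases y <;> simp [show p ≠ 0 by omega] at hy <;> omega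
  have := Nat.le_of_dvd (by norm_num) h4
  have := (Nat.pow_le_pow_right (by norm_num) hp).trans (Nat.pow_le_pow_left hy2 p)
  omega

lemma dvd_and_isCoprime_of_dvd_sub_pow {C y V s : ℤ} {p : ℕ} (hp : p ≠ 0) (hC : Squarefree C)
    (hCV : C ∣ V) (hyV : IsCoprime y V) (h : C * y ∣ V - s ^ p) : C ∣ s ∧ IsCoprime s y := by
  obtain ⟨t, ht⟩ := h
  constructor
  · rw [← hC.dvd_pow_iff_dvd hp, show s ^ p = V - C * (y * t) by linear_combination -ht]
    exact dvd_sub hCV (dvd_mul_right C _)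
  · have hys : IsCoprime y (s ^ p) := by
      rwa [show s ^ p = V + (-(C * t)) * y by linear_combination -ht,
        IsCoprime.add_mul_right_right_iff]
    exact ((IsCoprime.pow_right_iff (Nat.pos_of_ne_zero hp)).mp hys).symm

section

variable {C₁ C₂ c d x y k : ℕ} {δ : ℂ}

lemma conj_pow_eq_of_pow_eq (hδ : (C₁ : ℂ) ^ k * (C₁ * x + d * sqrtneg c) = δ ^ (2 * k + 1)) :
    conj δ ^ (2 * k + 1) = C₁ ^ k * (C₁ * x - d * sqrtneg c) := by
  rw [← map_pow, ← hδ]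
  simp [conj_sqrtneg, sub_eq_add_neg]

lemma pow_add_conj_pow_eq (hδ : (C₁ : ℂ) ^ k * (C₁ * x + d * sqrtneg c) = δ ^ (2 * k + 1)) :
    δ ^ (2 * k + 1) + conj δ ^ (2 * k + 1) = 2 * C₁ ^ (k + 1) * x := by
  rw [conj_pow_eq_of_pow_eq hδ, ← hδ]
  ring

lemma mul_conj_eq_of_pow_eq (hδ : (C₁ : ℂ) ^ k * (C₁ * x + d * sqrtneg c) = δ ^ (2 * k + 1))
    (hfact : C₁ * C₂ = c * d ^ 2) (heq : C₁ * x ^ 2 + C₂ = y ^ (2 * k + 1)) :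
    δ * conj δ = C₁ * y := by
  have hfact' : ((C₁ * C₂ : ℕ) : ℂ) = (c * d ^ 2 : ℕ) := congrArg _ hfact
  have heq' : ((C₁ * x ^ 2 + C₂ : ℕ) : ℂ) = (y ^ (2 * k + 1) : ℕ) := congrArg _ heq
  push_cast at hfact' heq'
  have hpow : (δ * conj δ) ^ (2 * k + 1) = ((C₁ * y : ℕ) : ℂ) ^ (2 * k + 1) := by
    rw [mul_pow, ← hδ, conj_pow_eq_of_pow_eq hδ]
    push_cast
    linear_combination (C₁ : ℂ) ^ (2 * k) * (-(d : ℂ) ^ 2 * sqrtneg_sq c - hfact' + C₁ * heq')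
  rw [Complex.mul_conj] at hpow ⊢
  have hreal : Complex.normSq δ ^ (2 * k + 1) = ((C₁ * y : ℕ) : ℝ) ^ (2 * k + 1) := by
    exact_mod_cast hpow
  rw [pow_left_inj₀ (Complex.normSq_nonneg δ) (by positivity) (by omega)] at hreal
  rw [hreal]
  push_cast
  rfl

lemma exists_add_conj_eq_mul_isCoprime (hC₁ : Squarefree C₁) (hδK : δ ∈ Kf c)
    (hδint : IsIntegral ℤ δ) (hδ : (C₁ : ℂ) ^ k * (C₁ * x + d * sqrtneg c) = δ ^ (2 * k + 1))
    (hfact : C₁ * C₂ = c * d ^ 2) (heq : C₁ * x ^ 2 + C₂ = y ^ (2 * k + 1))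
    (hyx : Nat.Coprime y (2 * C₁ * x)) :
    ∃ e : ℤ, δ + conj δ = (C₁ * e : ℤ) ∧ IsCoprime (C₁ * e) (y : ℤ) := by
  obtain ⟨s, hs⟩ := exists_add_conj_eq_intCast hδK hδint
  have hV : (dickson 1 ((C₁ * y : ℕ) : ℤ) (2 * k + 1)).eval s = (2 * C₁ ^ (k + 1) * x : ℕ) := by
    have h := eval_intCast_map (Int.castRingHom ℂ) (dickson 1 ((C₁ * y : ℕ) : ℤ) (2 * k + 1)) s
    rw [map_dickson, ← hs, eq_intCast, Int.cast_natCast, Nat.cast_mul,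
      ← mul_conj_eq_of_pow_eq hδ hfact heq,
      dickson_one_eval_add, pow_add_conj_pow_eq hδ, eq_intCast] at h
    exact_mod_cast h.symm
  have hdvd := dvd_dickson_one_eval_sub_pow ((C₁ * y : ℕ) : ℤ) s (2 * k).succ_ne_zero
  rw [hV] at hdvd
  push_cast at hdvd
  have hyV : Nat.Coprime y (2 * C₁ ^ (k + 1) * x) :=
    (hyx.pow_right (k + 1)).coprime_dvd_right (Dvd.intro ((2 * x) ^ k) (by ring))
  obtain ⟨⟨e, rfl⟩, hcop⟩ := dvd_and_isCoprime_of_dvd_sub_pow (2 * k).succ_ne_zero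
    (Int.squarefree_natCast.mpr hC₁) (Dvd.intro (2 * C₁ ^ k * x) (by ring))
    (by exact_mod_cast Nat.isCoprime_iff_coprime.mpr hyV) hdvd
  exact ⟨e, hs, hcop⟩

lemma false_of_eq_mul_conj (hδK : δ ∈ Kf c)
    (hδ : (C₁ : ℂ) ^ k * (C₁ * x + d * sqrtneg c) = δ ^ (2 * k + 1))
    (hfact : C₁ * C₂ = c * d ^ 2) (heq : C₁ * x ^ 2 + C₂ = y ^ (2 * k + 1))
    (hC₁ : 0 < C₁) (hx : 0 < x) (hC₂ : 0 < C₂) (hk : k ≠ 0) (hcop : Nat.Coprime (C₁ * x ^ 2) C₂)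
    {u : ℂ} (hu : IsIntegral ℤ u) (hδu : δ = u * conj δ) : False := by
  have hC₁' : (C₁ : ℂ) ≠ 0 := by exact_mod_cast hC₁.ne'
  have hconj : conj δ ≠ 0 := by
    have hre : (conj δ ^ (2 * k + 1)).re = C₁ ^ (k + 1) * x := by
      rw [conj_pow_eq_of_pow_eq hδ]
      simp [sqrtneg, ← Complex.ofReal_natCast, ← Complex.ofReal_pow]
      ring
    intro h0
    rw [h0, zero_pow (by omega), Complex.zero_re] at hre
    have : (0 : ℝ) < C₁ ^ (k + 1) * x := by positivity
    linarith
  have hu_mem : u ∈ Kf c := by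
    rw [eq_div_of_mul_eq hconj hδu.symm]
    exact div_mem hδK (conj_mem_Kf hδK)
  obtain ⟨τ, hτ⟩ := exists_add_conj_eq_intCast (pow_mem hu_mem (2 * k + 1)) (hu.pow _)
  have hE : (C₁ * x + d * sqrtneg c : ℂ) = u ^ (2 * k + 1) * (C₁ * x - d * sqrtneg c) := by
    refine mul_left_cancel₀ (pow_ne_zero k hC₁') ?_
    rw [hδ, mul_left_comm, ← conj_pow_eq_of_pow_eq hδ, ← mul_pow, ← hδu]
  have hE' :
      (C₁ * x - d * sqrtneg c : ℂ) = conj (u ^ (2 * k + 1)) * (C₁ * x + d * sqrtneg c) := by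
    simpa [conj_sqrtneg, sub_eq_add_neg] using congrArg conj hE
  have hfact' : ((C₁ * C₂ : ℕ) : ℂ) = (c * d ^ 2 : ℕ) := congrArg _ hfact
  push_cast at hfact'
  -- `z² + z̄² = τ z z̄` for `z = C₁x + d√-c`, and `z² + z̄² = 2(C₁²x² - cd²)`, `z z̄ = C₁²x² + cd²`
  have hrel : ((2 - τ) * (C₁ * x ^ 2 : ℕ) : ℂ) = ((2 + τ) * C₂ : ℤ) := by
    refine mul_left_cancel₀ hC₁' ?_
    push_cast
    linear_combination (C₁ * x + d * sqrtneg c : ℂ) * hE + (C₁ * x - d * sqrtneg c : ℂ) * hE'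
      + (C₁ * x + d * sqrtneg c : ℂ) * (C₁ * x - d * sqrtneg c) * hτ
      - (2 + τ) * (d : ℂ) ^ 2 * sqrtneg_sq c - (2 + τ) * hfact'
  exact false_of_two_sub_mul_eq_two_add_mul (by positivity) hC₂ hcop (by omega) heq
    (by exact_mod_cast hrel)

end

theorem stmt8_general (C₁ C₂ c d : ℕ) (hC₁pos : 0 < C₁) (hC₁sqf : Squarefree C₁)
    (hC₂pos : 0 < C₂) (hmod8 : C₁ * C₂ % 8 ≠ 7)
    (hfact : C₁ * C₂ = c * d ^ 2)
    (p : ℕ) (hp : p.Prime) (hpodd : Odd p)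
    (x y : ℕ) (hxpos : 0 < x)
    (heq : C₁ * x ^ 2 + C₂ = y ^ p)
    (hgcd : Nat.gcd (Nat.gcd (C₁ * x ^ 2) C₂) (y ^ p) = 1)
    (δ : ℂ) (hδK : δ ∈ Kf c) (hδint : IsIntegral ℤ δ)
    (hδeq : (C₁ : ℂ) ^ ((p - 1) / 2) * ((C₁ : ℂ) * (x : ℂ) + (d : ℂ) * sqrtneg c) = δ ^ p)
    (α β : ℂ) (hα : α = δ / (Real.sqrt C₁ : ℂ))
    (hβ : β = (starRingEnd ℂ) δ / (Real.sqrt C₁ : ℂ))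
    :
    (∃ m k : ℤ, (α + β) ^ 2 = (m : ℂ) ∧ α * β = (k : ℂ) ∧ IsCoprime m k) ∧
    ¬ ∃ u : ℂ, IsIntegral ℤ u ∧ IsIntegral ℤ u⁻¹ ∧ α = u * β := by
  obtain ⟨k, rfl⟩ := hpodd
  have hk : k ≠ 0 := by
    rintro rfl
    exact Nat.not_prime_one hp
  rw [show (2 * k + 1 - 1) / 2 = k by omega] at hδeq
  have hcop := coprime_of_gcd_gcd_add_eq_one (heq ▸ hgcd)
  have hr : ((Real.sqrt C₁ : ℝ) : ℂ) ^ 2 = C₁ := by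
    exact_mod_cast Real.sq_sqrt (Nat.cast_nonneg C₁)
  have hr0 : ((Real.sqrt C₁ : ℝ) : ℂ) ≠ 0 := by
    exact_mod_cast (Real.sqrt_pos.mpr (by exact_mod_cast hC₁pos)).ne'
  obtain ⟨e, hs, he⟩ := exists_add_conj_eq_mul_isCoprime hC₁sqf hδK hδint hδeq hfact heq
    (coprime_two_mul_mul_of_add_eq_pow (by omega) hmod8 heq hcop)
  refine ⟨⟨C₁ * e ^ 2, y, ?_, ?_,
    (he.pow_left (m := 2)).of_isCoprime_of_dvd_left ⟨C₁, by ring⟩⟩, ?_⟩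
  · rw [hα, hβ, ← add_div, div_pow, hr, hs]
    push_cast
    field_simp
  · rw [hα, hβ, div_mul_div_comm, ← sq, hr, mul_conj_eq_of_pow_eq hδeq hfact heq,
      mul_div_cancel_left₀ _ (by exact_mod_cast hC₁pos.ne'), Int.cast_natCast]
  · rintro ⟨u, hu, -, hαu⟩
    rw [hα, hβ, ← mul_div_assoc, div_left_inj' hr0] at hαu
    exact false_of_eq_mul_conj hδK hδeq hfact heq hC₁pos hxpos hC₂pos hk hcop hu hαu

theorem stmt8 (C₁ C₂ c d : ℕ) (hC₁pos : 0 < C₁) (hC₁sqf : Squarefree C₁)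
    (hC₂pos : 0 < C₂) (hcop : Nat.gcd C₁ C₂ = 1) (hmod8 : C₁ * C₂ % 8 ≠ 7)
    (hcpos : 0 < c) (hdpos : 0 < d) (hcsqf : Squarefree c)
    (hfact : C₁ * C₂ = c * d ^ 2)
    (p : ℕ) (hp : p.Prime) (hpodd : Odd p)
    (hpcl : ¬ p ∣ classNumberK c)
    (hp3 : p = 3 → ¬ ∃ m : ℤ, (C₁ : ℤ) * (C₂ : ℤ) = 3 * m ^ 2)
    (x y : ℕ) (hxpos : 0 < x) (hypos : 0 < y)
    (heq : C₁ * x ^ 2 + C₂ = y ^ p)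
    (hgcd : Nat.gcd (Nat.gcd (C₁ * x ^ 2) C₂) (y ^ p) = 1)
    (δ : ℂ) (hδK : δ ∈ Kf c) (hδint : IsIntegral ℤ δ)
    (hδeq : (C₁ : ℂ) ^ ((p - 1) / 2) * ((C₁ : ℂ) * (x : ℂ) + (d : ℂ) * sqrtneg c) = δ ^ p)
    (α β : ℂ) (hα : α = δ / (Real.sqrt C₁ : ℂ))
    (hβ : β = (starRingEnd ℂ) δ / (Real.sqrt C₁ : ℂ))
    :
    (∃ m k : ℤ, (α + β) ^ 2 = (m : ℂ) ∧ α * β = (k : ℂ) ∧ IsCoprime m k) ∧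
    ¬ ∃ u : ℂ, IsIntegral ℤ u ∧ IsIntegral ℤ u⁻¹ ∧ α = u * β :=
  stmt8_general C₁ C₂ c d hC₁pos hC₁sqf hC₂pos hmod8 hfact p hp hpodd x y hxpos heq hgcd δ hδK hδint
    hδeq α β hα hβ
end
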